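/- Aumann–Drèze value as a Myerson value on component-complete networks (Section 5.1): Let g be a network on a finite player set N such that for every component C ∈ N/g the restricted network g|_C is complete (every two distinct players of C are linked in g). Then for every TU-game v on N and every player i ∈ N, Sh_i(C, v|_C) = Sh_i(N, v^g), where C ∈ N/g is the component containing i; that is, the Aumann–Drèze value of (N, v, N/g) coincides with the Myerson value of (N, v, g). -/

import Mathlib

/-!
When every component of `g` is complete, the component of `j` in `S/g` is just `S ∩ C_j`, where
`C_j ∈ N/g` is the component of `j`. Hence `v^g(S) = Σ_{C ∈ N/g} v(S ∩ C)`, and the marginal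
contribution of `i` to `v^g` at every `S` equals its marginal contribution to the game
`S ↦ v(S ∩ C_i)`. In that game every player outside `C_i` is a null player, and adding a null
player leaves the Shapley value unchanged because the Shapley weights
`w(m, s) = (s-1)! (m-s)! / m!` satisfy `w(m+1, s) + w(m+1, s+1) = w(m, s)`.
-/

namespace Stmt17

/-- A TU-game on the player set `N`: a function on coalitions vanishing at `∅`. -/
abbrev Game (N : Type*) := {v : Finset N → ℝ // v ∅ = 0}

variable {N : Type*} [Fintype N] [DecidableEq N]

/-- The Shapley value of the game `w` on the player set `M`. -/
noncomputable def shapley (M : Finset N) (w : Finset N → ℝ) (i : N) : ℝ :=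
  ∑ S ∈ M.powerset.filter (fun S => i ∈ S),
    ((((S.card - 1).factorial * (M.card - S.card).factorial : ℕ) : ℝ) /
        ((M.card.factorial : ℕ) : ℝ)) * (w S - w (S.erase i))

/-- The restriction `g|_S` of the network `g` to the coalition `S` (viewed as a
graph on `N` with no links outside `S`). -/
def restrictGraph (g : SimpleGraph N) (S : Finset N) : SimpleGraph N where
  Adj a b := g.Adj a b ∧ a ∈ S ∧ b ∈ S
  symm := ⟨fun _ _ h => ⟨h.1.symm, h.2.2, h.2.1⟩⟩
  loopless := ⟨fun a h => g.loopless.irrefl a h.1⟩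

/-- The component of `S/g` (the partition of `S` into components of `g|_S`)
containing the player `i ∈ S`. -/
noncomputable def compIn (g : SimpleGraph N) (S : Finset N) (i : N) : Finset N :=
  (Set.toFinite {j | (restrictGraph g S).Reachable i j}).toFinset

/-- The graph game `v^g`, with `v^g(S) = Σ_{T ∈ S/g} v(T)`. -/
noncomputable def graphGame (g : SimpleGraph N) (v : Game N) (S : Finset N) : ℝ :=
  ∑ T ∈ S.image (fun i => compIn g S i), v.1 T

/-- The component of `N/g` containing the player `i`. -/
noncomputable def compOf (g : SimpleGraph N) (i : N) : Finset N :=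
  (Set.toFinite {j | g.Reachable i j}).toFinset

end Stmt17

namespace Stmt17

variable {N : Type*}

section Shapley

variable [DecidableEq N]

noncomputable def shapleyWeight (m s : ℕ) : ℝ :=
  (((s - 1).factorial * (m - s).factorial : ℕ) : ℝ) / ((m.factorial : ℕ) : ℝ)

lemma shapleyWeight_succ_add_succ {m s : ℕ} (hs : 1 ≤ s) (hsm : s ≤ m) :
    shapleyWeight (m + 1) s + shapleyWeight (m + 1) (s + 1) = shapleyWeight m s := by
  obtain ⟨t, rfl⟩ := Nat.exists_eq_add_of_le' hs
  obtain ⟨k, rfl⟩ := Nat.exists_eq_add_of_le hsm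
  simp only [shapleyWeight, Nat.add_sub_cancel, Nat.add_sub_cancel_left,
    show t + 1 + k + 1 - (t + 1) = k + 1 by omega, show t + 1 + k + 1 - (t + 1 + 1) = k by omega]
  rw [← add_div, div_eq_div_iff (by positivity) (by positivity)]
  push_cast [Nat.factorial_succ]
  ring

lemma shapley_eq_sum_powerset (M : Finset N) (w : Finset N → ℝ) (i : N) :
    shapley M w i = ∑ S ∈ M.powerset, shapleyWeight M.card S.card * (w S - w (S.erase i)) :=
  Finset.sum_filter_of_ne fun S _ h => by_contra fun hiS => h <| by
    rw [Finset.erase_eq_of_notMem hiS, sub_self, mul_zero]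

lemma shapley_congr_marginal {M : Finset N} {w w' : Finset N → ℝ} {i : N}
    (h : ∀ S ⊆ M, i ∈ S → w S - w (S.erase i) = w' S - w' (S.erase i)) :
    shapley M w i = shapley M w' i :=
  Finset.sum_congr rfl fun S hS => by
    rw [Finset.mem_filter, Finset.mem_powerset] at hS
    rw [h S hS.1 hS.2]

lemma shapley_insert_of_null {M : Finset N} {w : Finset N → ℝ} {i j : N} (hjM : j ∉ M)
    (hij : i ≠ j) (hnull : ∀ S, w (insert j S) = w S) :
    shapley (insert j M) w i = shapley M w i := by
  rw [shapley_eq_sum_powerset, shapley_eq_sum_powerset, Finset.sum_powerset_insert hjM,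
    ← Finset.sum_add_distrib, Finset.card_insert_of_notMem hjM]
  refine Finset.sum_congr rfl fun S hS => ?_
  have hSM : S ⊆ M := Finset.mem_powerset.mp hS
  rw [Finset.card_insert_of_notMem fun hjS => hjM (hSM hjS), Finset.erase_insert_of_ne hij.symm,
    hnull, hnull, ← add_mul]
  by_cases hiS : i ∈ S
  · rw [shapleyWeight_succ_add_succ (Finset.card_pos.mpr ⟨i, hiS⟩) (Finset.card_le_card hSM)]
  · rw [Finset.erase_eq_of_notMem hiS, sub_self, mul_zero, mul_zero]

lemma shapley_union_of_null {M D : Finset N} {w : Finset N → ℝ} {i : N} (hiD : i ∉ D)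
    (hnull : ∀ j ∈ D, ∀ S, w (insert j S) = w S) :
    shapley (M ∪ D) w i = shapley M w i := by
  induction D using Finset.induction_on with
  | empty => rw [Finset.union_empty]
  | insert j D _ ih =>
    obtain ⟨hij, hiD⟩ := not_or.mp (Finset.mem_insert.not.mp hiD)
    obtain ⟨hnullj, hnull⟩ := (Finset.forall_mem_insert _ _ _).mp hnull
    rw [Finset.union_insert]
    by_cases hj : j ∈ M ∪ D
    · rw [Finset.insert_eq_of_mem hj, ih hiD hnull]
    · rw [shapley_insert_of_null hj hij hnullj, ih hiD hnull]

lemma shapley_inter_of_subset {M C : Finset N} (u : Finset N → ℝ) {i : N} (hCM : C ⊆ M)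
    (hiC : i ∈ C) :
    shapley M (fun S => u (S ∩ C)) i = shapley C u i := calc
  shapley M (fun S => u (S ∩ C)) i = shapley (C ∪ M \ C) (fun S => u (S ∩ C)) i := by
    rw [Finset.union_sdiff_of_subset hCM]
  _ = shapley C (fun S => u (S ∩ C)) i :=
    shapley_union_of_null (fun h => (Finset.mem_sdiff.mp h).2 hiC) fun j hj S => by
      rw [Finset.insert_inter_of_notMem (Finset.mem_sdiff.mp hj).2]
  _ = shapley C u i := shapley_congr_marginal fun S hS _ => by
    rw [Finset.inter_eq_left.mpr hS, Finset.inter_eq_left.mpr ((Finset.erase_subset i S).trans hS)]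

end Shapley

lemma restrictGraph_le (g : SimpleGraph N) (S : Finset N) : restrictGraph g S ≤ g :=
  fun _ _ h => h.1

lemma mem_of_reachable_restrictGraph {g : SimpleGraph N} {S : Finset N} {j k : N}
    (h : (restrictGraph g S).Reachable j k) (hj : j ∈ S) : k ∈ S := by
  obtain ⟨w⟩ := h
  induction w with
  | nil => exact hj
  | cons h _ ih => exact ih h.2.2

variable [Fintype N]

lemma mem_compOf {g : SimpleGraph N} {i j : N} : j ∈ compOf g i ↔ g.Reachable i j := by
  simp [compOf]

lemma compOf_eq_of_mem {g : SimpleGraph N} {i j : N} (h : j ∈ compOf g i) :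
    compOf g j = compOf g i := by
  ext k
  simp only [mem_compOf]
  exact ⟨(mem_compOf.mp h).trans, (mem_compOf.mp h).symm.trans⟩

variable [DecidableEq N]

lemma compIn_eq_inter_compOf {g : SimpleGraph N}
    (hcc : ∀ i j : N, g.Reachable i j → i ≠ j → g.Adj i j) {S : Finset N} {j : N} (hj : j ∈ S) :
    compIn g S j = S ∩ compOf g j := by
  ext k
  simp only [compIn, Set.Finite.mem_toFinset, Finset.mem_inter, mem_compOf]
  constructor
  · intro h
    exact ⟨mem_of_reachable_restrictGraph h hj, h.mono (restrictGraph_le g S)⟩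
  · rintro ⟨hkS, hjk⟩
    rcases eq_or_ne j k with rfl | hne
    · exact SimpleGraph.Reachable.refl j
    · exact SimpleGraph.Adj.reachable ⟨hcc j k hjk hne, hj, hkS⟩

lemma graphGame_eq_sum_inter_compOf {g : SimpleGraph N}
    (hcc : ∀ i j : N, g.Reachable i j → i ≠ j → g.Adj i j) (v : Game N) (S : Finset N) :
    graphGame g v S = ∑ C ∈ Finset.univ.image (compOf g), v.1 (S ∩ C) := by
  have inter_eq_compIn : ∀ {j k}, j ∈ S ∩ compOf g k → S ∩ compOf g k = compIn g S j :=
    fun hj => by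
      rw [Finset.mem_inter] at hj
      rw [compIn_eq_inter_compOf hcc hj.1, compOf_eq_of_mem hj.2]
  have nonempty_of_ne : ∀ {C}, v.1 (S ∩ C) ≠ 0 → (S ∩ C).Nonempty := fun h =>
    Finset.nonempty_iff_ne_empty.mpr fun hC => h (by rw [hC]; exact v.2)
  symm
  -- `C ↦ S ∩ C` matches the components meeting `S` with those of `S/g`; the others give `v ∅ = 0`.
  refine Finset.sum_bij_ne_zero (fun C _ _ => S ∩ C) ?_ ?_ ?_ fun _ _ _ => rfl
  · intro C hC hv
    obtain ⟨k, -, rfl⟩ := Finset.mem_image.mp hC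
    obtain ⟨j, hj⟩ := nonempty_of_ne hv
    exact Finset.mem_image.mpr ⟨j, (Finset.mem_inter.mp hj).1, (inter_eq_compIn hj).symm⟩
  · intro C₁ hC₁ hv C₂ hC₂ _ h
    obtain ⟨k₁, -, rfl⟩ := Finset.mem_image.mp hC₁
    obtain ⟨k₂, -, rfl⟩ := Finset.mem_image.mp hC₂
    obtain ⟨j, hj⟩ := nonempty_of_ne hv
    rw [← compOf_eq_of_mem (Finset.mem_inter.mp hj).2,
      compOf_eq_of_mem (Finset.mem_inter.mp (h ▸ hj)).2]
  · intro T hT hv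
    obtain ⟨j, hj, rfl⟩ := Finset.mem_image.mp hT
    exact ⟨compOf g j, Finset.mem_image_of_mem _ (Finset.mem_univ j),
      by rwa [← compIn_eq_inter_compOf hcc hj], (compIn_eq_inter_compOf hcc hj).symm⟩

lemma graphGame_sub_graphGame_erase {g : SimpleGraph N}
    (hcc : ∀ i j : N, g.Reachable i j → i ≠ j → g.Adj i j) (v : Game N) (i : N) (S : Finset N) :
    graphGame g v S - graphGame g v (S.erase i)
      = v.1 (S ∩ compOf g i) - v.1 (S.erase i ∩ compOf g i) := by
  rw [graphGame_eq_sum_inter_compOf hcc, graphGame_eq_sum_inter_compOf hcc,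
    ← Finset.sum_sub_distrib]
  refine Finset.sum_eq_single_of_mem _ (Finset.mem_image_of_mem _ (Finset.mem_univ i)) ?_
  intro C hC hCi
  obtain ⟨k, -, rfl⟩ := Finset.mem_image.mp hC
  have hik : i ∉ compOf g k := fun h => hCi (compOf_eq_of_mem h).symm
  rw [Finset.erase_inter, Finset.erase_eq_of_notMem fun h => hik (Finset.mem_inter.mp h).2,
    sub_self]

theorem aumannDreze_eq_myerson_general (g : SimpleGraph N)
    (hcc : ∀ i j : N, g.Reachable i j → i ≠ j → g.Adj i j) :
    ∀ (v : Game N) (i : N),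
      shapley (compOf g i) v.1 i = shapley Finset.univ (graphGame g v) i := by
  intro v i
  calc shapley (compOf g i) v.1 i = shapley Finset.univ (fun S => v.1 (S ∩ compOf g i)) i :=
        (shapley_inter_of_subset v.1 (Finset.subset_univ _) (mem_compOf.mpr .rfl)).symm
    _ = shapley Finset.univ (graphGame g v) i :=
        shapley_congr_marginal fun S _ _ => (graphGame_sub_graphGame_erase hcc v i S).symm

/-- If every component of `g` is internally complete (any two distinct mutually
reachable players are adjacent), then for every game `v` and every player `i`,
the Aumann–Drèze value `Sh_i(C, v|_C)` — where `C` is the component of `i` —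
coincides with the Myerson value `Sh_i(N, v^g)`. -/
theorem aumannDreze_eq_myerson [Nonempty N] (g : SimpleGraph N)
    (hcc : ∀ i j : N, g.Reachable i j → i ≠ j → g.Adj i j) :
    ∀ (v : Game N) (i : N),
      shapley (compOf g i) v.1 i = shapley Finset.univ (graphGame g v) i :=
  aumannDreze_eq_myerson_general g hcc

end Stmt17
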